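/- The function h(ξ) = ln(∫₀^{exp(ξ)} exp(-t²/2) dt) is strictly concave on ℝ, i.e., h''(ξ) < 0 for all ξ ∈ ℝ. -/

import Mathlib

/-! With `F(x) = ∫₀ˣ exp(-t²/2) dt` we have `h' = g ∘ exp` for `g(x) = x F'(x) / F(x)`, so
`h''(ξ) = e^ξ g'(e^ξ)`. The quotient rule gives `g' = F' · φ / F²` with
`φ(x) = (1 - x²) F(x) - x F'(x)`; since `φ(0) = 0` and `φ'(x) = -2x F(x) < 0` for `x > 0`,
`φ` is negative on `(0, ∞)`, hence so are `g'` and `h''`. -/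

noncomputable def h (ξ : ℝ) : ℝ :=
  Real.log (∫ t in (0:ℝ)..(Real.exp ξ), Real.exp (-t^2/2))

open Real Set

noncomputable def gaussIntegral (x : ℝ) : ℝ := ∫ t in (0:ℝ)..x, exp (-t ^ 2 / 2)

noncomputable def gaussRatio (x : ℝ) : ℝ := x * exp (-x ^ 2 / 2) / gaussIntegral x

noncomputable def gaussRatioDerivNumerator (x : ℝ) : ℝ :=
  (1 - x ^ 2) * gaussIntegral x - x * exp (-x ^ 2 / 2)

lemma continuous_exp_neg_sq_div_two : Continuous fun t : ℝ => exp (-t ^ 2 / 2) := by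
  fun_prop

lemma hasDerivAt_exp_neg_sq_div_two (x : ℝ) :
    HasDerivAt (fun t : ℝ => exp (-t ^ 2 / 2)) (-x * exp (-x ^ 2 / 2)) x := by
  have hquad : HasDerivAt (fun t : ℝ => -t ^ 2 / 2) (-x) x :=
    ((hasDerivAt_pow 2 x).neg.div_const 2).congr_deriv (by push_cast; ring)
  exact hquad.exp.congr_deriv (by ring)

lemma hasDerivAt_gaussIntegral (x : ℝ) : HasDerivAt gaussIntegral (exp (-x ^ 2 / 2)) x :=
  intervalIntegral.integral_hasDerivAt_right
    (continuous_exp_neg_sq_div_two.intervalIntegrable 0 x)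
    (continuous_exp_neg_sq_div_two.stronglyMeasurableAtFilter _ _)
    continuous_exp_neg_sq_div_two.continuousAt

lemma gaussIntegral_pos {x : ℝ} (hx : 0 < x) : 0 < gaussIntegral x :=
  intervalIntegral.intervalIntegral_pos_of_pos
    (continuous_exp_neg_sq_div_two.intervalIntegrable 0 x) (fun _ => exp_pos _) hx

lemma hasDerivAt_gaussRatioDerivNumerator (x : ℝ) :
    HasDerivAt gaussRatioDerivNumerator (-2 * x * gaussIntegral x) x := by
  have hleft := ((hasDerivAt_const x (1:ℝ)).sub (hasDerivAt_pow 2 x)).mul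
    (hasDerivAt_gaussIntegral x)
  have hright := (hasDerivAt_id x).mul (hasDerivAt_exp_neg_sq_div_two x)
  exact (hleft.sub hright).congr_deriv (by simp only [Pi.sub_apply, id]; ring)

lemma gaussRatioDerivNumerator_neg {x : ℝ} (hx : 0 < x) : gaussRatioDerivNumerator x < 0 := by
  have hanti : StrictAntiOn gaussRatioDerivNumerator (Ici 0) := by
    refine strictAntiOn_of_deriv_neg (convex_Ici 0)
      (fun y _ => (hasDerivAt_gaussRatioDerivNumerator y).continuousAt.continuousWithinAt) ?_
    intro y hy
    rw [interior_Ici] at hy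
    rw [(hasDerivAt_gaussRatioDerivNumerator y).deriv]
    nlinarith [mul_pos (mem_Ioi.mp hy) (gaussIntegral_pos hy)]
  have hzero : gaussRatioDerivNumerator 0 = 0 := by
    simp [gaussRatioDerivNumerator, gaussIntegral]
  simpa [hzero] using hanti self_mem_Ici (mem_Ici.mpr hx.le) hx

lemma hasDerivAt_gaussRatio {x : ℝ} (hx : 0 < x) :
    HasDerivAt gaussRatio
      (exp (-x ^ 2 / 2) * gaussRatioDerivNumerator x / gaussIntegral x ^ 2) x := by
  have hquot := ((hasDerivAt_id x).mul (hasDerivAt_exp_neg_sq_div_two x)).div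
    (hasDerivAt_gaussIntegral x) (gaussIntegral_pos hx).ne'
  refine hquot.congr_deriv ?_
  simp only [Pi.mul_apply, id, gaussRatioDerivNumerator]
  ring

lemma deriv_gaussRatio_neg {x : ℝ} (hx : 0 < x) : deriv gaussRatio x < 0 := by
  rw [(hasDerivAt_gaussRatio hx).deriv]
  exact div_neg_of_neg_of_pos (mul_neg_of_pos_of_neg (exp_pos _)
    (gaussRatioDerivNumerator_neg hx)) (pow_pos (gaussIntegral_pos hx) 2)

lemma hasDerivAt_h (ξ : ℝ) : HasDerivAt h (gaussRatio (exp ξ)) ξ := by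
  have hcomp := ((hasDerivAt_gaussIntegral (exp ξ)).comp ξ (hasDerivAt_exp ξ)).log
    (gaussIntegral_pos (exp_pos ξ)).ne'
  exact hcomp.congr_deriv (by simp only [Function.comp_apply, gaussRatio]; ring)

lemma deriv_h : deriv h = fun ξ => gaussRatio (exp ξ) :=
  funext fun ξ => (hasDerivAt_h ξ).deriv

lemma deriv_deriv_h (ξ : ℝ) : deriv (deriv h) ξ = deriv gaussRatio (exp ξ) * exp ξ := by
  rw [deriv_h]
  exact ((hasDerivAt_gaussRatio (exp_pos ξ)).differentiableAt.hasDerivAt.comp ξ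
    (hasDerivAt_exp ξ)).deriv

theorem stmt11 :
    StrictConcaveOn ℝ Set.univ h ∧ ∀ ξ : ℝ, deriv (deriv h) ξ < 0 := by
  have hneg : ∀ ξ : ℝ, deriv (deriv h) ξ < 0 := fun ξ => by
    rw [deriv_deriv_h]
    exact mul_neg_of_neg_of_pos (deriv_gaussRatio_neg (exp_pos ξ)) (exp_pos ξ)
  have hcont : Continuous h :=
    continuous_iff_continuousAt.mpr fun ξ => (hasDerivAt_h ξ).continuousAt
  refine ⟨strictConcaveOn_univ_of_deriv2_neg hcont fun ξ => ?_, hneg⟩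
  simpa only [Function.iterate_succ, Function.iterate_zero, Function.comp_apply, id] using hneg ξ
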